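/- (Saturation lemma.) Fix a second-level sequent Ψ ⇛ Φ and consider only sequents whose formulas are subformulas of Ψ ∪ Φ. If a sequent Γ ▸ Δ (of either level, with Γ ∪ Δ ⊆ SF(Ψ,Φ)) is not cut-free provable in GLS_seq, then there is a saturated sequent Γ⁺ ▸ Δ⁺ of the same level with Γ ⊆ Γ⁺, Δ ⊆ Δ⁺, Γ⁺ ∪ Δ⁺ ⊆ SF(Ψ,Φ), and Γ⁺ ▸ Δ⁺ is not cut-free provable in GLS_seq. -/
import Mathlib


/-- Modal formulas: propositional variables, ⊥, →, □. -/
inductive Formula : Type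
  | var : ℕ → Formula
  | bot : Formula
  | imp : Formula → Formula → Formula
  | box : Formula → Formula
deriving DecidableEq

/-- Levels of sequents in GLS_seq: first level (⇒) and second level (⇛). -/
inductive SeqLevel : Type
  | one
  | two
deriving DecidableEq

/-- The set of subformulas of a formula. -/
def Formula.subf : Formula → Finset Formula
  | .var p => {.var p}
  | .bot => {.bot}
  | .imp φ ψ => insert (.imp φ ψ) (φ.subf ∪ ψ.subf)
  | .box φ => insert (.box φ) φ.subf

/-- SF(Ψ,Φ): all subformulas of formulas in Ψ ∪ Φ. -/
def SF (Ψ Φ : Finset Formula) : Finset Formula := (Ψ ∪ Φ).biUnion Formula.subf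

def Formula.isBox : Formula → Bool
  | .box _ => true
  | _ => false

def Formula.unbox : Formula → Formula
  | .box φ => φ
  | φ => φ

/-- Θ_□ = {φ : □φ ∈ Θ}. -/
def boxInv (Θ : Finset Formula) : Finset Formula :=
  (Θ.filter fun ψ => ψ.isBox).image Formula.unbox

/-- The sequent calculus GLS_seq, on sequents of two levels.  The Bool parameter
records whether the cut rule may be used: `GLSSeq true` is provability in GLS_seq,
`GLSSeq false` is cut-free provability.  The first-level fragment is exactly GL_seq. -/
inductive GLSSeq : Bool → SeqLevel → Finset Formula → Finset Formula → Prop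
  | init (c lv φ) : GLSSeq c lv {φ} {φ}
  | initBot (c lv) : GLSSeq c lv {Formula.bot} ∅
  | cut {lv Γ Δ} (φ) : GLSSeq true lv Γ (insert φ Δ) → GLSSeq true lv (insert φ Γ) Δ →
      GLSSeq true lv Γ Δ
  | weak {c lv Γ Δ Γ' Δ'} : Γ ⊆ Γ' → Δ ⊆ Δ' → GLSSeq c lv Γ Δ → GLSSeq c lv Γ' Δ'
  | impL {c lv Γ Δ φ ψ} : GLSSeq c lv Γ (insert φ Δ) → GLSSeq c lv (insert ψ Γ) Δ →
      GLSSeq c lv (insert (.imp φ ψ) Γ) Δ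
  | impR {c lv Γ Δ φ ψ} : GLSSeq c lv (insert φ Γ) (insert ψ Δ) →
      GLSSeq c lv Γ (insert (.imp φ ψ) Δ)
  | boxGL {c Γ φ} : GLSSeq c .one (Γ ∪ Γ.image .box ∪ {.box φ}) {φ} →
      GLSSeq c .one (Γ.image .box) {.box φ}
  | boxL {c Γ Δ} (φ) : GLSSeq c .two (insert φ Γ) Δ → GLSSeq c .two (insert (.box φ) Γ) Δ
  | lift {c Γ Δ} : GLSSeq c .one Γ Δ → GLSSeq c .two Γ Δ

/-- The sequent calculus GL_seq (on first-level sequents only). -/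
inductive GLSeq : Bool → Finset Formula → Finset Formula → Prop
  | init (c φ) : GLSeq c {φ} {φ}
  | initBot (c) : GLSeq c {Formula.bot} ∅
  | cut {Γ Δ} (φ) : GLSeq true Γ (insert φ Δ) → GLSeq true (insert φ Γ) Δ → GLSeq true Γ Δ
  | weak {c Γ Δ Γ' Δ'} : Γ ⊆ Γ' → Δ ⊆ Δ' → GLSeq c Γ Δ → GLSeq c Γ' Δ'
  | impL {c Γ Δ φ ψ} : GLSeq c Γ (insert φ Δ) → GLSeq c (insert ψ Γ) Δ →
      GLSeq c (insert (.imp φ ψ) Γ) Δ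
  | impR {c Γ Δ φ ψ} : GLSeq c (insert φ Γ) (insert ψ Δ) → GLSeq c Γ (insert (.imp φ ψ) Δ)
  | boxGL {c Γ φ} : GLSeq c (Γ ∪ Γ.image .box ∪ {.box φ}) {φ} → GLSeq c (Γ.image .box) {.box φ}

/-- Proof trees of GLS_seq (cut included). -/
inductive GLSTree : SeqLevel → Finset Formula → Finset Formula → Type
  | init (lv φ) : GLSTree lv {φ} {φ}
  | initBot (lv) : GLSTree lv {Formula.bot} ∅
  | cut {lv Γ Δ} (φ) : GLSTree lv Γ (insert φ Δ) → GLSTree lv (insert φ Γ) Δ → GLSTree lv Γ Δ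
  | weak {lv Γ Δ} (Γ' Δ' : Finset Formula) : Γ ⊆ Γ' → Δ ⊆ Δ' → GLSTree lv Γ Δ → GLSTree lv Γ' Δ'
  | impL {lv Γ Δ} (φ ψ) : GLSTree lv Γ (insert φ Δ) → GLSTree lv (insert ψ Γ) Δ →
      GLSTree lv (insert (.imp φ ψ) Γ) Δ
  | impR {lv Γ Δ} (φ ψ) : GLSTree lv (insert φ Γ) (insert ψ Δ) → GLSTree lv Γ (insert (.imp φ ψ) Δ)
  | boxGL (Γ φ) : GLSTree .one (Γ ∪ Γ.image .box ∪ {.box φ}) {φ} → GLSTree .one (Γ.image .box) {.box φ}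
  | boxL {Γ Δ} (φ) : GLSTree .two (insert φ Γ) Δ → GLSTree .two (insert (.box φ) Γ) Δ
  | lift {Γ Δ} : GLSTree .one Γ Δ → GLSTree .two Γ Δ

/-- The set of principal formulas of all (□L) rules occurring in a proof tree. -/
def GLSTree.principals : ∀ {lv Γ Δ}, GLSTree lv Γ Δ → Finset Formula
  | _, _, _, .init _ _ => ∅
  | _, _, _, .initBot _ => ∅
  | _, _, _, .cut _ t₁ t₂ => t₁.principals ∪ t₂.principals
  | _, _, _, .weak _ _ _ _ t => t.principals
  | _, _, _, .impL _ _ t₁ t₂ => t₁.principals ∪ t₂.principals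
  | _, _, _, .impR _ _ t => t.principals
  | _, _, _, .boxGL _ _ t => t.principals
  | _, _, _, .boxL φ t => insert (Formula.box φ) t.principals
  | _, _, _, .lift t => t.principals

/-- A proof tree bundled with its level and conclusion. -/
abbrev PGLSTree : Type :=
  (lv : SeqLevel) × (Γ : Finset Formula) × (Δ : Finset Formula) × GLSTree lv Γ Δ

/-- The set of subproofs of a proof tree (including the tree itself). -/
def GLSTree.subproofs {lv Γ Δ} (t : GLSTree lv Γ Δ) : Set PGLSTree :=
  insert ⟨lv, Γ, Δ, t⟩ <|
    match lv, Γ, Δ, t with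
    | _, _, _, .init _ _ => ∅
    | _, _, _, .initBot _ => ∅
    | _, _, _, .cut _ t₁ t₂ => t₁.subproofs ∪ t₂.subproofs
    | _, _, _, .weak _ _ _ _ t₁ => t₁.subproofs
    | _, _, _, .impL _ _ t₁ t₂ => t₁.subproofs ∪ t₂.subproofs
    | _, _, _, .impR _ _ t₁ => t₁.subproofs
    | _, _, _, .boxGL _ _ t₁ => t₁.subproofs
    | _, _, _, .boxL _ t₁ => t₁.subproofs
    | _, _, _, .lift t₁ => t₁.subproofs

/-- Kripke satisfaction over a frame `R` with atomic valuation `v`. -/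
def KSat {W : Type} (R : W → W → Prop) (v : W → ℕ → Prop) : Formula → W → Prop
  | .var p, w => v w p
  | .bot, _ => False
  | .imp φ ψ, w => KSat R v φ w → KSat R v ψ w
  | .box φ, w => ∀ w', R w w' → KSat R v φ w'

/-- A GL-model: a nonempty, transitive, converse well-founded Kripke model. -/
structure GLModel where
  World : Type
  ne : Nonempty World
  R : World → World → Prop
  trans : Transitive R
  cwf : ∀ f : ℕ → World, ¬ ∀ i, R (f i) (f (i + 1))
  val : World → ℕ → Prop

/-- Truth of a formula at a world of a GL-model. -/
def GLModel.sat (M : GLModel) (w : M.World) (φ : Formula) : Prop := KSat M.R M.val φ w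

/-- Truth of a sequent Γ ▸ Δ at a world: some γ ∈ Γ is false or some δ ∈ Δ is true. -/
def GLModel.seqTrue (M : GLModel) (w : M.World) (Γ Δ : Finset Formula) : Prop :=
  (∃ γ ∈ Γ, ¬ M.sat w γ) ∨ (∃ δ ∈ Δ, M.sat w δ)

/-- w is Σ-reflexive: □α → α is true at w for every □α ∈ Σ. -/
def GLModel.reflexiveFor (M : GLModel) (w : M.World) (S : Finset Formula) : Prop :=
  ∀ α : Formula, Formula.box α ∈ S → M.sat w ((Formula.box α).imp α)

/-- Saturation conditions (→L), (→R) for first-level sequents. -/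
def Saturated1 (Γ Δ : Finset Formula) : Prop :=
  (∀ φ ψ : Formula, φ.imp ψ ∈ Γ → φ ∈ Δ ∨ ψ ∈ Γ) ∧
  (∀ φ ψ : Formula, φ.imp ψ ∈ Δ → φ ∈ Γ ∧ ψ ∈ Δ)

/-- Saturation for second-level sequents: additionally (□L). -/
def Saturated2 (Γ Δ : Finset Formula) : Prop :=
  Saturated1 Γ Δ ∧ ∀ φ : Formula, Formula.box φ ∈ Γ → φ ∈ Γ

def Saturated : SeqLevel → Finset Formula → Finset Formula → Prop
  | .one => Saturated1
  | .two => Saturated2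

/-- The Hilbert system GL. -/
inductive GLHilbert : Formula → Prop
  | ax1 (φ ψ : Formula) : GLHilbert (φ.imp (ψ.imp φ))
  | ax2 (φ ψ χ : Formula) :
      GLHilbert ((φ.imp (ψ.imp χ)).imp ((φ.imp ψ).imp (φ.imp χ)))
  | ax3 (φ : Formula) : GLHilbert (((φ.imp .bot).imp .bot).imp φ)
  | axK (φ ψ : Formula) :
      GLHilbert ((Formula.box (φ.imp ψ)).imp ((Formula.box φ).imp (Formula.box ψ)))
  | axLob (φ : Formula) :
      GLHilbert ((Formula.box ((Formula.box φ).imp φ)).imp (Formula.box φ))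
  | mp {φ ψ} : GLHilbert (φ.imp ψ) → GLHilbert φ → GLHilbert ψ
  | nec {φ} : GLHilbert φ → GLHilbert (Formula.box φ)

/-- The Hilbert system GLS: theorems of GL and all □α → α, closed under modus ponens. -/
inductive GLSHilbert : Formula → Prop
  | gl {φ} : GLHilbert φ → GLSHilbert φ
  | refl (α : Formula) : GLSHilbert ((Formula.box α).imp α)
  | mp {φ ψ} : GLSHilbert (φ.imp ψ) → GLSHilbert φ → GLSHilbert ψ

/-- Conjunction (encoded with → and ⊥) of a list of formulas; empty conjunction is ⊤. -/
def Formula.conj : List Formula → Formula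
  | [] => Formula.bot.imp Formula.bot
  | φ :: l => ((φ.imp ((Formula.conj l).imp .bot)).imp .bot)

/-- Membership predicate for the canonical model: saturated first-level sequents over S
that are not cut-free provable in GLS_seq. -/
def W0pred (S : Finset Formula) (s : Finset Formula × Finset Formula) : Prop :=
  Saturated1 s.1 s.2 ∧ ¬ GLSSeq false SeqLevel.one s.1 s.2 ∧ s.1 ∪ s.2 ⊆ S

/-- Worlds of the canonical model. -/
def W0 (S : Finset Formula) : Type := {s : Finset Formula × Finset Formula // W0pred S s}

/-- Accessibility of the canonical model: (Γ⇒Δ) R₀ (Γ'⇒Δ') iff Γ_□ ⊊ Γ'_□ and Γ_□ ⊆ Γ'. -/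
def R0 (S : Finset Formula) (s t : W0 S) : Prop :=
  boxInv s.1.1 ⊂ boxInv t.1.1 ∧ boxInv s.1.1 ⊆ t.1.1

/-- Valuation of the canonical model: p is true at (Γ⇒Δ) iff p ∈ Γ. -/
def V0 (S : Finset Formula) (s : W0 S) (p : ℕ) : Prop := Formula.var p ∈ s.1.1

/-- The extended set of worlds W = W₀ ∪ ℕ. -/
def Wext (S : Finset Formula) : Type := W0 S ⊕ ℕ

/-- The extended accessibility relation, with distinguished world `wp` in W₀. -/
def Rext (S : Finset Formula) (wp : W0 S) : Wext S → Wext S → Prop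
  | Sum.inl x, Sum.inl y => R0 S x y
  | Sum.inr _, Sum.inl y => y = wp ∨ R0 S wp y
  | Sum.inr n, Sum.inr m => m < n
  | Sum.inl _, Sum.inr _ => False

/-- The extended valuation: worlds in ℕ behave like the distinguished world `wp`. -/
def Vext (S : Finset Formula) (wp : W0 S) : Wext S → ℕ → Prop
  | Sum.inl x, p => V0 S x p
  | Sum.inr _, p => V0 S wp p
lemma Formula.mem_subf_self (φ : Formula) : φ ∈ φ.subf := by
  cases φ <;> simp [Formula.subf]

lemma Formula.subf_subset {φ ψ : Formula} (h : ψ ∈ φ.subf) : ψ.subf ⊆ φ.subf := by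
  induction φ with
  | var p => simp [Formula.subf] at h; subst h; simp [Formula.subf]
  | bot => simp [Formula.subf] at h; subst h; simp [Formula.subf]
  | imp a b iha ihb =>
    simp only [Formula.subf, Finset.mem_insert, Finset.mem_union] at h
    rcases h with h | h | h
    · subst h; exact subset_refl _
    · exact (iha h).trans ((Finset.subset_union_left).trans (Finset.subset_insert _ _))
    · exact (ihb h).trans ((Finset.subset_union_right).trans (Finset.subset_insert _ _))
  | box a iha =>
    simp only [Formula.subf, Finset.mem_insert] at h
    rcases h with h | h
    · subst h; exact subset_refl _
    · exact (iha h).trans (Finset.subset_insert _ _)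

/-- Closure of a set of formulas under immediate subformulas. -/
def SFClosed (S : Finset Formula) : Prop :=
  (∀ φ ψ : Formula, Formula.imp φ ψ ∈ S → φ ∈ S ∧ ψ ∈ S) ∧
  (∀ φ : Formula, Formula.box φ ∈ S → φ ∈ S)

lemma SF_mem_of_subf {Ψ Φ : Finset Formula} {χ ρ : Formula} (h : χ ∈ SF Ψ Φ)
    (hρ : ρ ∈ χ.subf) : ρ ∈ SF Ψ Φ := by
  simp only [SF, Finset.mem_biUnion] at h ⊢
  obtain ⟨θ, hθ, hχ⟩ := h
  exact ⟨θ, hθ, Formula.subf_subset hχ hρ⟩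

lemma SF_closed (Ψ Φ : Finset Formula) : SFClosed (SF Ψ Φ) := by
  constructor
  · intro φ ψ h
    refine ⟨SF_mem_of_subf h ?_, SF_mem_of_subf h ?_⟩ <;>
      simp [Formula.subf, Formula.mem_subf_self]
  · intro φ h
    exact SF_mem_of_subf h (by simp [Formula.subf, Formula.mem_subf_self])

/-- One saturation step for the propositional conditions. -/
lemma sat_step_imp {S : Finset Formula} (hcl : SFClosed S) {lv : SeqLevel}
    {Γ Δ : Finset Formula} (hΓ : Γ ⊆ S) (hΔ : Δ ⊆ S)
    (h : ¬ GLSSeq false lv Γ Δ) (hns : ¬ Saturated1 Γ Δ) :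
    ∃ Γ' Δ' : Finset Formula, Γ ⊆ Γ' ∧ Δ ⊆ Δ' ∧ Γ' ⊆ S ∧ Δ' ⊆ S ∧
      Γ.card + Δ.card < Γ'.card + Δ'.card ∧ ¬ GLSSeq false lv Γ' Δ' := by
  rw [Saturated1, not_and_or] at hns
  rcases hns with hns | hns
  · push_neg at hns
    obtain ⟨φ, ψ, hmem, hφ, hψ⟩ := hns
    have hφS : φ ∈ S := (hcl.1 φ ψ (hΓ hmem)).1
    have hψS : ψ ∈ S := (hcl.1 φ ψ (hΓ hmem)).2
    have hone : ¬ GLSSeq false lv Γ (insert φ Δ) ∨ ¬ GLSSeq false lv (insert ψ Γ) Δ := by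
      by_contra hc
      push_neg at hc
      have := GLSSeq.impL hc.1 hc.2
      rw [Finset.insert_eq_self.mpr hmem] at this
      exact h this
    rcases hone with hone | hone
    · refine ⟨Γ, insert φ Δ, subset_refl _, Finset.subset_insert _ _, hΓ,
        Finset.insert_subset hφS hΔ, ?_, hone⟩
      rw [Finset.card_insert_of_notMem hφ]; omega
    · refine ⟨insert ψ Γ, Δ, Finset.subset_insert _ _, subset_refl _,
        Finset.insert_subset hψS hΓ, hΔ, ?_, hone⟩
      rw [Finset.card_insert_of_notMem hψ]; omega
  · push_neg at hns
    obtain ⟨φ, ψ, hmem, hor⟩ := hns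
    have hφS : φ ∈ S := (hcl.1 φ ψ (hΔ hmem)).1
    have hψS : ψ ∈ S := (hcl.1 φ ψ (hΔ hmem)).2
    have hone : ¬ GLSSeq false lv (insert φ Γ) (insert ψ Δ) := by
      intro hc
      have := GLSSeq.impR hc
      rw [Finset.insert_eq_self.mpr hmem] at this
      exact h this
    refine ⟨insert φ Γ, insert ψ Δ, Finset.subset_insert _ _, Finset.subset_insert _ _,
      Finset.insert_subset hφS hΓ, Finset.insert_subset hψS hΔ, ?_, hone⟩
    have h1 : Γ.card ≤ (insert φ Γ).card := Finset.card_le_card (Finset.subset_insert _ _)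
    have h2 : Δ.card ≤ (insert ψ Δ).card := Finset.card_le_card (Finset.subset_insert _ _)
    by_cases hφΓ : φ ∈ Γ
    · have hψΔ : ψ ∉ Δ := hor hφΓ
      have := Finset.card_insert_of_notMem hψΔ
      omega
    · have := Finset.card_insert_of_notMem hφΓ
      omega

lemma sat_aux (S : Finset Formula) (hcl : SFClosed S) :
    ∀ n : ℕ, ∀ (lv : SeqLevel) (Γ Δ : Finset Formula), Γ ⊆ S → Δ ⊆ S →
      2 * S.card - Γ.card - Δ.card ≤ n → ¬ GLSSeq false lv Γ Δ →
      ∃ Γp Δp : Finset Formula, Γ ⊆ Γp ∧ Δ ⊆ Δp ∧ Γp ⊆ S ∧ Δp ⊆ S ∧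
        Saturated lv Γp Δp ∧ ¬ GLSSeq false lv Γp Δp := by
  intro n
  induction n with
  | zero =>
    intro lv Γ Δ hΓ hΔ hm h
    have h1 : Γ.card ≤ S.card := Finset.card_le_card hΓ
    have h2 : Δ.card ≤ S.card := Finset.card_le_card hΔ
    have hΓS : Γ = S := Finset.eq_of_subset_of_card_le hΓ (by omega)
    have hΔS : Δ = S := Finset.eq_of_subset_of_card_le hΔ (by omega)
    have hsat1 : Saturated1 S S :=
      ⟨fun φ ψ hmem => Or.inl (hcl.1 φ ψ hmem).1, fun φ ψ hmem => hcl.1 φ ψ hmem⟩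
    rw [hΓS, hΔS] at h ⊢
    refine ⟨S, S, subset_refl _, subset_refl _, subset_refl _, subset_refl _, ?_, h⟩
    cases lv
    · exact hsat1
    · exact ⟨hsat1, fun φ hmem => hcl.2 φ hmem⟩
  | succ n ih =>
    intro lv Γ Δ hΓ hΔ hm h
    by_cases hsat : Saturated lv Γ Δ
    · exact ⟨Γ, Δ, subset_refl _, subset_refl _, hΓ, hΔ, hsat, h⟩
    have hstep : ∃ Γ' Δ' : Finset Formula, Γ ⊆ Γ' ∧ Δ ⊆ Δ' ∧ Γ' ⊆ S ∧ Δ' ⊆ S ∧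
        Γ.card + Δ.card < Γ'.card + Δ'.card ∧ ¬ GLSSeq false lv Γ' Δ' := by
      cases lv with
      | one => exact sat_step_imp hcl hΓ hΔ h hsat
      | two =>
        rw [Saturated, Saturated2, not_and_or] at hsat
        rcases hsat with hsat | hsat
        · exact sat_step_imp hcl hΓ hΔ h hsat
        · push_neg at hsat
          obtain ⟨φ, hmem, hφ⟩ := hsat
          have hφS : φ ∈ S := hcl.2 φ (hΓ hmem)
          have hone : ¬ GLSSeq false SeqLevel.two (insert φ Γ) Δ := by
            intro hc
            have := GLSSeq.boxL φ hc
            rw [Finset.insert_eq_self.mpr hmem] at this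
            exact h this
          refine ⟨insert φ Γ, Δ, Finset.subset_insert _ _, subset_refl _,
            Finset.insert_subset hφS hΓ, hΔ, ?_, hone⟩
          rw [Finset.card_insert_of_notMem hφ]; omega
    obtain ⟨Γ', Δ', hΓ', hΔ', hΓ'S, hΔ'S, hcard, h'⟩ := hstep
    have h1 : Γ'.card ≤ S.card := Finset.card_le_card hΓ'S
    have h2 : Δ'.card ≤ S.card := Finset.card_le_card hΔ'S
    obtain ⟨Γp, Δp, hp1, hp2, hp3, hp4, hp5, hp6⟩ :=
      ih lv Γ' Δ' hΓ'S hΔ'S (by omega) h'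
    exact ⟨Γp, Δp, hΓ'.trans hp1, hΔ'.trans hp2, hp3, hp4, hp5, hp6⟩

/-- Saturation lemma: any sequent over SF(Ψ,Φ) (of either level) that is not cut-free
provable in GLS_seq extends to a saturated sequent of the same level over SF(Ψ,Φ)
that is not cut-free provable. -/
theorem saturation_lemma (Ψ Φ : Finset Formula) (lv : SeqLevel) (Γ Δ : Finset Formula)
    (hsub : Γ ∪ Δ ⊆ SF Ψ Φ) (h : ¬ GLSSeq false lv Γ Δ) :
    ∃ Γp Δp : Finset Formula, Γ ⊆ Γp ∧ Δ ⊆ Δp ∧ Γp ∪ Δp ⊆ SF Ψ Φ ∧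
      Saturated lv Γp Δp ∧ ¬ GLSSeq false lv Γp Δp := by
  rw [Finset.union_subset_iff] at hsub
  obtain ⟨Γp, Δp, h1, h2, h3, h4, h5, h6⟩ :=
    sat_aux (SF Ψ Φ) (SF_closed Ψ Φ) (2 * (SF Ψ Φ).card) lv Γ Δ hsub.1 hsub.2
      (by omega) h
  exact ⟨Γp, Δp, h1, h2, Finset.union_subset h3 h4, h5, h6⟩
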